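/- arXiv:2304.02258 — 3 statements merged into one kernel-verified Lean document; each statement's English description precedes it below -/
import Mathlib

section
/- If a k-regular finite simple graph on n vertices, with exactly one of n and k even, admits a 2-coloring in which at least one vertex is under strict majority illusion, then k ≤ n − 3. -/
/-!
A vertex adjacent to all others sees the whole graph minus itself, and deleting a single
agent cannot turn one strict majority into the opposite one; so a vertex under strict
majority illusion has degree at most `n - 2`. Since `n - k` is odd, `k = n - 2` is excluded
as well.
-/

open Finset

variable {V : Type*} [Fintype V] [DecidableEq V]

/-- The strict majority color of a finite set of agents (`true` = red, `false` = blue),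
or `none` in case of a tie. -/
def maj (c : V → Bool) (s : Finset V) : Option Bool :=
  if 2 * (s.filter fun v => c v = true).card > s.card then some true
  else if 2 * (s.filter fun v => c v = false).card > s.card then some false
  else none

/-- Vertex `i` is under weak-majority illusion: the majority winner (possibly a tie)
of its neighborhood differs from the global one. -/
def weakIll (G : SimpleGraph V) [DecidableRel G.Adj] (c : V → Bool) (i : V) : Prop :=
  maj c (G.neighborFinset i) ≠ maj c Finset.univ

/-- Vertex `i` is under strict majority illusion: neither its neighborhood nor the whole
graph is tied, and their majority winners differ. -/
def strictIll (G : SimpleGraph V) [DecidableRel G.Adj] (c : V → Bool) (i : V) : Prop :=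
  maj c (G.neighborFinset i) ≠ none ∧ maj c Finset.univ ≠ none ∧
    maj c (G.neighborFinset i) ≠ maj c Finset.univ

instance (G : SimpleGraph V) [DecidableRel G.Adj] (c : V → Bool) :
    DecidablePred (weakIll G c) := fun _ => by unfold weakIll; infer_instance

instance (G : SimpleGraph V) [DecidableRel G.Adj] (c : V → Bool) :
    DecidablePred (strictIll G c) := fun _ => by unfold strictIll; infer_instance

lemma card_filter_eq_add_card_filter_eq_not {α : Type*} (c : α → Bool) (s : Finset α)
    (b : Bool) :
    #{v ∈ s | c v = b} + #{v ∈ s | c v = !b} = #s := by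
  simpa only [Bool.eq_not_iff, ne_comm] using card_filter_add_card_filter_not (s := s) (c · = b)

lemma maj_eq_some_iff {α : Type*} (c : α → Bool) (s : Finset α) (b : Bool) :
    maj c s = some b ↔ #s < 2 * #{v ∈ s | c v = b} := by
  have hpart := card_filter_eq_add_card_filter_eq_not c s true
  rw [Bool.not_true] at hpart
  unfold maj
  cases b <;> split_ifs <;> simp only [Option.some.injEq, Bool.false_eq_true,
    Bool.true_eq_false, false_iff, true_iff, not_lt] <;> omega

lemma maj_erase_eq_of_eq_some {α : Type*} [DecidableEq α] {c : α → Bool} {s : Finset α}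
    {a : α} {b b' : Bool} (herase : maj c (s.erase a) = some b) (hs : maj c s = some b') :
    b = b' := by
  rw [maj_eq_some_iff] at herase hs
  by_contra hne
  obtain rfl : b' = !b := by cases b <;> cases b' <;> simp_all
  have hpart := card_filter_eq_add_card_filter_eq_not c s b
  have hsub : #{v ∈ s.erase a | c v = b} ≤ #{v ∈ s | c v = b} :=
    card_le_card (filter_subset_filter _ (erase_subset a s))
  have hcard := pred_card_le_card_erase (a := a) (s := s)
  omega

lemma SimpleGraph.not_isUniversal_of_strictIll {G : SimpleGraph V} [DecidableRel G.Adj]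
    {c : V → Bool} {i : V} (hi : strictIll G c i) : ¬G.IsUniversal i := by
  intro huniv
  obtain ⟨hN, hU, hne⟩ := hi
  rw [(G.neighborFinset_eq_erase_univ i).mpr huniv] at hN hne
  obtain ⟨b, hb⟩ := Option.ne_none_iff_exists'.mp hN
  obtain ⟨b', hb'⟩ := Option.ne_none_iff_exists'.mp hU
  exact hne (by rw [hb, hb', maj_erase_eq_of_eq_some hb hb'])

theorem regular_mixed_parity_degree_bound (G : SimpleGraph V) [DecidableRel G.Adj] (k : ℕ)
    (hreg : ∀ v : V, G.degree v = k)
    (hpar : (Even (Fintype.card V) ∧ Odd k) ∨ (Odd (Fintype.card V) ∧ Even k))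
    (h : ∃ c : V → Bool, ∃ i : V, strictIll G c i) :
    k + 3 ≤ Fintype.card V := by
  obtain ⟨c, i, hi⟩ := h
  have hdeg := (G.degree_lt_card_sub_one i).mpr (G.not_isUniversal_of_strictIll hi)
  rw [hreg] at hdeg
  rcases hpar with ⟨⟨a, ha⟩, ⟨b, hb⟩⟩ | ⟨⟨a, ha⟩, ⟨b, hb⟩⟩ <;> omega
end

section
/- Let G be a k-regular graph on n vertices with n and k both even and k ≥ 3. If G admits a 2-coloring under which strictly more than half of the vertices are under strict majority illusion, then n ≥ 2(3k+2)/(k−2). -/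
open Finset

variable {V : Type*} [Fintype V] [DecidableEq V]

/-! Let `t` be the global majority colour and `B` the set of vertices of the other colour. An
illusioned vertex has more than `k / 2`, hence (`k` even) at least `k / 2 + 1`, neighbours in
`B`, while exactly `k * #B` edge ends meet `B`. Since `n` is even, there are at least `n / 2 + 1`
illusioned vertices and `#B ≤ n / 2 - 1`, so `(n / 2 + 1) (k / 2 + 1) ≤ k (n / 2 - 1)`, which
rearranges to `n (k - 2) ≥ 2 (3k + 2)`. -/

section Maj

variable {α : Type*} {c : α → Bool} {s : Finset α} {b : Bool}

lemma lt_two_mul_card_filter_of_maj_eq_some (h : maj c s = some b) :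
    #s < 2 * #(s.filter fun v => c v = b) := by
  unfold maj at h
  split_ifs at h <;> cases h <;> assumption

lemma two_mul_card_filter_not_lt_of_maj_eq_some (h : maj c s = some b) :
    2 * #(s.filter fun v => c v = !b) < #s := by
  have hsplit : #(s.filter fun v => c v = b) + #(s.filter fun v => c v = !b) = #s := by
    simpa only [Bool.eq_not] using card_filter_add_card_filter_not (s := s) (c · = b)
  have := lt_two_mul_card_filter_of_maj_eq_some h
  omega

end Maj

lemma SimpleGraph.IsRegularOfDegree.sum_card_neighborFinset_filter {α : Type*} [Fintype α]
    {G : SimpleGraph α} [DecidableRel G.Adj] {k : ℕ} (hG : G.IsRegularOfDegree k)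
    (p : α → Prop) [DecidablePred p] :
    ∑ v, #((G.neighborFinset v).filter p) = k * #(univ.filter p) := by
  calc ∑ v, #((G.neighborFinset v).filter p)
      = ∑ v, #((univ.filter p).bipartiteAbove G.Adj v) := by
        simp only [bipartiteAbove, G.neighborFinset_eq_filter, filter_filter, and_comm]
    _ = ∑ u ∈ univ.filter p, #(univ.bipartiteBelow G.Adj u) :=
        sum_card_bipartiteAbove_eq_sum_card_bipartiteBelow _
    _ = ∑ u ∈ univ.filter p, k := sum_congr rfl fun u _ => by
        simp only [bipartiteBelow, G.adj_comm _ u, ← G.neighborFinset_eq_filter,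
          G.card_neighborFinset_eq_degree, hG.degree_eq]
    _ = k * #(univ.filter p) := by rw [sum_const, smul_eq_mul, mul_comm]

section Illusion

variable {α : Type*} [Fintype α] {G : SimpleGraph α} [DecidableRel G.Adj] {c : α → Bool}
  {t : Bool}

lemma strictIll.maj_neighborFinset_eq {i : α} (hi : strictIll G c i)
    (ht : maj c univ = some t) : maj c (G.neighborFinset i) = some !t := by
  obtain ⟨hN, -, hne⟩ := hi
  obtain ⟨s, hs⟩ := Option.ne_none_iff_exists'.mp hN
  rw [hs, ht] at hne
  rw [hs]
  cases s <;> cases t <;> simp_all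

lemma strictIll.degree_lt_two_mul_card_minority {i : α} (hi : strictIll G c i)
    (ht : maj c univ = some t) :
    G.degree i < 2 * #((G.neighborFinset i).filter fun u => c u = !t) := by
  simpa only [G.card_neighborFinset_eq_degree] using
    lt_two_mul_card_filter_of_maj_eq_some (hi.maj_neighborFinset_eq ht)

lemma card_strictIll_mul_le {k : ℕ} (hG : G.IsRegularOfDegree k) (hk : Even k)
    (ht : maj c univ = some t) :
    #(univ.filter (strictIll G c)) * (k + 2) ≤ 2 * k * #(univ.filter fun u => c u = !t) := by
  have hvertex : ∀ v ∈ univ.filter (strictIll G c),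
      k + 2 ≤ 2 * #((G.neighborFinset v).filter fun u => c u = !t) := by
    intro v hv
    have := (mem_filter.mp hv).2.degree_lt_two_mul_card_minority ht
    rw [hG.degree_eq] at this
    obtain ⟨r, rfl⟩ := hk
    omega
  calc #(univ.filter (strictIll G c)) * (k + 2)
      = ∑ _v ∈ univ.filter (strictIll G c), (k + 2) := by rw [sum_const, smul_eq_mul]
    _ ≤ ∑ v ∈ univ.filter (strictIll G c),
          2 * #((G.neighborFinset v).filter fun u => c u = !t) := sum_le_sum hvertex
    _ ≤ ∑ v, 2 * #((G.neighborFinset v).filter fun u => c u = !t) :=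
        sum_le_sum_of_subset (subset_univ _)
    _ = 2 * k * #(univ.filter fun u => c u = !t) := by
      rw [← mul_sum, hG.sum_card_neighborFinset_filter, mul_assoc]

end Illusion

lemma div_le_of_two_mul_add_le {n k : ℕ} (h : 2 * n + 6 * k + 4 ≤ k * n) :
    (2 * (3 * k + 2) / (k - 2) : ℚ) ≤ n := by
  have hk : 2 < k := by
    by_contra! hk
    nlinarith [Nat.mul_le_mul_right n hk]
  have hk' : (0 : ℚ) < k - 2 := by
    rw [sub_pos]
    exact_mod_cast hk
  rw [div_le_iff₀ hk']
  have : (2 * n + 6 * k + 4 : ℚ) ≤ k * n := by exact_mod_cast h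
  linarith

theorem regular_even_even_majority_majority_bound_general (G : SimpleGraph V) [DecidableRel G.Adj]
    (k : ℕ) (hreg : ∀ v : V, G.degree v = k)
    (hn : Even (Fintype.card V)) (hk : Even k)
    (h : ∃ c : V → Bool,
      2 * (Finset.univ.filter fun i => strictIll G c i).card > Fintype.card V) :
    (Fintype.card V : ℚ) ≥ 2 * (3 * k + 2) / (k - 2) := by
  obtain ⟨c, hc⟩ := h
  replace hc : Fintype.card V < 2 * #(univ.filter (strictIll G c)) := hc
  obtain ⟨i, hi⟩ : (univ.filter (strictIll G c)).Nonempty := by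
    rw [← card_pos]
    omega
  obtain ⟨t, ht⟩ := Option.ne_none_iff_exists'.mp (mem_filter.mp hi).2.2.1
  have hedges := card_strictIll_mul_le hreg hk ht
  have hminority := two_mul_card_filter_not_lt_of_maj_eq_some ht
  rw [card_univ] at hminority
  obtain ⟨m, hm⟩ := hn
  have hI : m + 1 ≤ #(univ.filter (strictIll G c)) := by omega
  have hB : #(univ.filter fun u => c u = !t) + 1 ≤ m := by omega
  apply div_le_of_two_mul_add_le
  nlinarith [Nat.mul_le_mul_right (k + 2) hI, Nat.mul_le_mul_left (2 * k) hB]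

theorem regular_even_even_majority_majority_bound (G : SimpleGraph V) [DecidableRel G.Adj]
    (k : ℕ) (hreg : ∀ v : V, G.degree v = k)
    (hn : Even (Fintype.card V)) (hk : Even k) (hk3 : 3 ≤ k)
    (h : ∃ c : V → Bool,
      2 * (Finset.univ.filter fun i => strictIll G c i).card > Fintype.card V) :
    (Fintype.card V : ℚ) ≥ 2 * (3 * k + 2) / (k - 2) :=
  regular_even_even_majority_majority_bound_general G k hreg hn hk h
end

section
/- Let G be a k-regular graph on n vertices with n even, k odd, and k ≥ 2 (hence k ≥ 3). If G admits a 2-coloring under which strictly more than half of the vertices are under strict majority illusion, then n ≥ 2(3k+1)/(k−1). -/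
open Finset

variable {V : Type*} [Fintype V] [DecidableEq V]

/-! Let `b` be the global majority colour and `B` the set of vertices of the other colour, so
`2|B| < n`. A vertex under strict illusion has a strict majority of its `k` neighbours in `B`, so
double counting the edges between the set `I` of such vertices and `B` gives `|I|(k+1) ≤ 2k|B|`.
With `n = 2m`, `|I| ≥ m + 1` and `|B| ≤ m - 1` this becomes `m(k - 1) ≥ 3k + 1`, which also
forces `k ≥ 2`. -/

lemma card_lt_two_mul_card_filter_of_maj_eq_some {α : Type*} {c : α → Bool} {s : Finset α}
    {b : Bool} (h : maj c s = some b) : #s < 2 * #{v ∈ s | c v = b} := by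
  unfold maj at h
  split_ifs at h with htrue hfalse <;> cases h
  · exact htrue
  · exact hfalse

lemma two_mul_card_filter_not_lt_card_of_maj_eq_some {α : Type*} {c : α → Bool}
    {s : Finset α} {b : Bool} (h : maj c s = some b) : 2 * #{v ∈ s | c v = !b} < #s := by
  have hsplit := card_filter_add_card_filter_not (s := s) (p := fun v => c v = b)
  simp only [← Bool.eq_not] at hsplit
  have := card_lt_two_mul_card_filter_of_maj_eq_some h
  omega

lemma maj_neighborFinset_eq_not_of_strictIll {α : Type*} [Fintype α] {G : SimpleGraph α}
    [DecidableRel G.Adj] {c : α → Bool} {i : α} {b : Bool} (hi : strictIll G c i)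
    (hb : maj c univ = some b) : maj c (G.neighborFinset i) = some !b := by
  obtain ⟨b', hb'⟩ := Option.ne_none_iff_exists'.mp hi.1
  have hne : b' ≠ b := fun h => hi.2.2 (by rw [hb', hb, h])
  rw [hb', Bool.eq_not.mpr hne]

lemma SimpleGraph.card_mul_succ_le_two_mul_card_mul {α : Type*} [Fintype α] (G : SimpleGraph α)
    [DecidableRel G.Adj] {k : ℕ} {I B : Finset α} (hB : ∀ v ∈ B, G.degree v ≤ k)
    (hI : ∀ i ∈ I, k < 2 * #{v ∈ B | G.Adj i v}) :
    #I * (k + 1) ≤ 2 * (#B * k) := by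
  have hdegB : ∀ v ∈ B, #(I.bipartiteBelow G.Adj v) ≤ k := fun v hv =>
    calc #(I.bipartiteBelow G.Adj v) ≤ #(G.neighborFinset v) :=
          card_le_card fun i hi => G.mem_neighborFinset v i |>.2 (mem_filter.1 hi).2.symm
      _ ≤ k := G.card_neighborFinset_eq_degree v ▸ hB v hv
  calc #I * (k + 1) = ∑ _i ∈ I, (k + 1) := by rw [sum_const, smul_eq_mul]
    _ ≤ ∑ i ∈ I, 2 * #(B.bipartiteAbove G.Adj i) := sum_le_sum fun i hi => hI i hi
    _ = 2 * ∑ v ∈ B, #(I.bipartiteBelow G.Adj v) := by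
      rw [← mul_sum, sum_card_bipartiteAbove_eq_sum_card_bipartiteBelow]
    _ ≤ 2 * (#B * k) := by
      grw [sum_le_card_nsmul B _ k hdegB, smul_eq_mul]

lemma two_mul_three_mul_add_one_div_le {n i b k : ℕ} (hn : Even n) (hi : n < 2 * i)
    (hb : 2 * b < n) (hcount : i * (k + 1) ≤ 2 * (b * k)) :
    2 * (3 * k + 1) / (k - 1) ≤ (n : ℚ) := by
  obtain ⟨m, rfl⟩ := hn
  have hkey : (m + 1) * (k + 1) + 2 * k ≤ 2 * (m * k) := by
    have hbm : b + 1 ≤ m := by omega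
    have him : m + 1 ≤ i := by omega
    nlinarith
  have hkey' : ((m : ℚ) + 1) * (k + 1) + 2 * k ≤ 2 * (m * k) := by exact_mod_cast hkey
  have hk : (0 : ℚ) < k - 1 := by
    by_contra! hk
    nlinarith [(m.cast_nonneg : (0 : ℚ) ≤ m)]
  rw [div_le_iff₀ hk]
  push_cast
  linarith

theorem regular_even_odd_majority_majority_bound_general (G : SimpleGraph V) [DecidableRel G.Adj]
    (k : ℕ) (hreg : ∀ v : V, G.degree v = k)
    (hn : Even (Fintype.card V))
    (h : ∃ c : V → Bool,
      2 * (Finset.univ.filter fun i => strictIll G c i).card > Fintype.card V) :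
    (Fintype.card V : ℚ) ≥ 2 * (3 * k + 1) / (k - 1) := by
  obtain ⟨c, hc⟩ := h
  set I : Finset V := {i | strictIll G c i}
  obtain ⟨i₀, hi₀⟩ : I.Nonempty := card_pos.mp (by omega)
  obtain ⟨b, hb⟩ := Option.ne_none_iff_exists'.mp (mem_filter.mp hi₀).2.2.1
  have hminority := two_mul_card_filter_not_lt_card_of_maj_eq_some hb
  rw [card_univ] at hminority
  have hI : ∀ i ∈ I, k < 2 * #{v ∈ {v | c v = !b} | G.Adj i v} := fun i hi => by
    have hmaj := card_lt_two_mul_card_filter_of_maj_eq_some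
      (maj_neighborFinset_eq_not_of_strictIll (mem_filter.mp hi).2 hb)
    rw [G.card_neighborFinset_eq_degree, hreg] at hmaj
    convert hmaj using 3
    ext v
    simp [and_comm]
  exact two_mul_three_mul_add_one_div_le hn hc hminority
    (G.card_mul_succ_le_two_mul_card_mul (fun v _ => (hreg v).le) hI)

theorem regular_even_odd_majority_majority_bound (G : SimpleGraph V) [DecidableRel G.Adj]
    (k : ℕ) (hreg : ∀ v : V, G.degree v = k)
    (hn : Even (Fintype.card V)) (hk : Odd k) (hk2 : 2 ≤ k)
    (h : ∃ c : V → Bool,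
      2 * (Finset.univ.filter fun i => strictIll G c i).card > Fintype.card V) :
    (Fintype.card V : ℚ) ≥ 2 * (3 * k + 1) / (k - 1) :=
  regular_even_odd_majority_majority_bound_general G k hreg hn h
end
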